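/- arXiv:math/0502452 — 7 statements merged into one kernel-verified Lean document; each statement's English description precedes it below -/
import Mathlib

section
/- If G is a finite graph with ψ(G) < χ(G), then any proper coloring of G attaining the local chromatic number ψ(G) uses strictly more than χ(G) colors. -/
/-- A proper coloring of a graph with natural-number colors. -/
def IsProperColoring {V : Type} (G : SimpleGraph V) (c : V → ℕ) : Prop :=
  ∀ u v, G.Adj u v → c u ≠ c v

/-- The number of colors in the most colorful (open) neighborhood, plus one. -/
def localBound {V : Type} [Fintype V] [DecidableEq V] (G : SimpleGraph V)
    [DecidableRel G.Adj] (c : V → ℕ) : ℕ :=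
  (Finset.univ.sup fun v => ((G.neighborFinset v).image c).card) + 1

/-- The local chromatic number ψ(G). -/
noncomputable def psi {V : Type} [Fintype V] [DecidableEq V] (G : SimpleGraph V)
    [DecidableRel G.Adj] : ℕ :=
  sInf {n | ∃ c : V → ℕ, IsProperColoring G c ∧ localBound G c = n}

lemma chrom_le_image_card {V : Type} [Fintype V] [DecidableEq V] (G : SimpleGraph V)
    (f : V → ℕ) (hf : IsProperColoring G f) :
    G.chromaticNumber ≤ ((Finset.univ.image f).card : ℕ∞) := by
  let C : G.Coloring {x // x ∈ Finset.univ.image f} :=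
    SimpleGraph.Coloring.mk (fun v => ⟨f v, by simp⟩)
      (fun {u v} h => by
        simp only [ne_eq, Subtype.mk.injEq]
        exact hf u v h)
  have := C.colorable.chromaticNumber_le
  simpa using this

/-- if ψ(G) < χ(G), then any proper coloring attaining ψ(G)
uses strictly more than χ(G) colors. -/
theorem stmt3 {V : Type} [Fintype V] [DecidableEq V] (G : SimpleGraph V)
    [DecidableRel G.Adj]
    (hlt : (psi G : ℕ∞) < G.chromaticNumber)
    (c : V → ℕ) (hc : IsProperColoring G c) (hatt : localBound G c = psi G) :
    G.chromaticNumber < ((Finset.univ.image c).card : ℕ∞) := by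
  classical
  set S : Finset ℕ := Finset.univ.image c with hS
  set k : ℕ := S.card with hk
  -- χ(G) ≤ k
  have hχk : G.chromaticNumber ≤ (k : ℕ∞) := chrom_le_image_card G c hc
  -- ψ < k  (from ψ < χ ≤ k, all finite)
  have hψk : psi G < k := by
    have := lt_of_lt_of_le hlt hχk
    exact_mod_cast this
  -- so sup of local color counts < k - 1 is what we need:
  set sup : ℕ := Finset.univ.sup fun v => ((G.neighborFinset v).image c).card with hsup
  have hsupk : sup + 1 < k := by
    have : localBound G c < k := hatt ▸ hψk
    simpa [localBound, hsup] using this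
  have hk2 : 2 ≤ k := by omega
  -- V is nonempty since k ≥ 2 > 0
  have hSne : S.Nonempty := Finset.card_pos.mp (by omega)
  set m : ℕ := S.min' hSne with hm
  have hmS : m ∈ S := S.min'_mem hSne
  have hek : (S.erase m).card = k - 1 := by rw [Finset.card_erase_of_mem hmS]
  -- for vertices of color m, a recoloring exists
  have hne : ∀ v : V, ((S.erase m) \ ((G.neighborFinset v).image c)).Nonempty := by
    intro v
    apply Finset.card_pos.mp
    have h1 : ((G.neighborFinset v).image c).card ≤ sup :=
      Finset.le_sup (f := fun v => ((G.neighborFinset v).image c).card) (Finset.mem_univ v)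
    have h2 := Finset.le_card_sdiff ((G.neighborFinset v).image c) (S.erase m)
    omega
  set c' : V → ℕ := fun v =>
    if c v = m then ((S.erase m) \ ((G.neighborFinset v).image c)).min' (hne v) else c v
    with hc'
  have hc'mem : ∀ v, c' v ∈ S.erase m := by
    intro v
    by_cases h : c v = m
    · simp only [hc', h, if_pos]
      have := Finset.min'_mem _ (hne v)
      exact (Finset.mem_sdiff.mp this).1
    · simp only [hc', h, if_neg, if_false]
      exact Finset.mem_erase.mpr ⟨h, Finset.mem_image_of_mem c (Finset.mem_univ v)⟩
  have hc'notnbr : ∀ v, c v = m → c' v ∉ (G.neighborFinset v).image c := by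
    intro v h
    simp only [hc', h, if_pos]
    have := Finset.min'_mem _ (hne v)
    exact (Finset.mem_sdiff.mp this).2
  -- c' is a proper coloring
  have hc'p : IsProperColoring G c' := by
    intro u v hadj
    by_cases hu : c u = m <;> by_cases hv : c v = m
    · exact absurd (hu.trans hv.symm) (hc u v hadj)
    · intro heq
      apply hc'notnbr u hu
      rw [heq]
      show c' v ∈ _
      have : c' v = c v := by simp [hc', hv]
      rw [this]
      exact Finset.mem_image_of_mem c ((G.mem_neighborFinset u v).mpr hadj)
    · intro heq
      apply hc'notnbr v hv
      rw [← heq]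
      have : c' u = c u := by simp [hc', hu]
      rw [this]
      exact Finset.mem_image_of_mem c ((G.mem_neighborFinset v u).mpr hadj.symm)
    · have h1 : c' u = c u := by simp [hc', hu]
      have h2 : c' v = c v := by simp [hc', hv]
      rw [h1, h2]; exact hc u v hadj
  -- χ ≤ card of image of c' ≤ k - 1
  have hχ' : G.chromaticNumber ≤ ((Finset.univ.image c').card : ℕ∞) :=
    chrom_le_image_card G c' hc'p
  have himg : (Finset.univ.image c').card ≤ k - 1 := by
    rw [← hek]
    apply Finset.card_le_card
    intro x hx
    obtain ⟨v, _, rfl⟩ := Finset.mem_image.mp hx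
    exact hc'mem v
  calc G.chromaticNumber ≤ ((k - 1 : ℕ) : ℕ∞) := by
        exact le_trans hχ' (by exact_mod_cast himg)
    _ < (k : ℕ∞) := by exact_mod_cast Nat.sub_lt (by omega) one_pos
end

section
/- A finite graph G satisfies ψ(G) ≤ r attained by a proper coloring using at most m colors if and only if there exists a graph homomorphism from G to U(m,r). -/
/-!
A homomorphism `f : G →g U(m,r)` is read as a colouring `v ↦ (f v).1` together with, for every
vertex, a set `(f v).2` of `r - 1` colours that contains the colours of all neighbours and not the
colour of `v` itself; adjacency in `U(m,r)` then forces the colouring to be proper and locally at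
most `r - 1`-chromatic. Conversely, a proper colouring whose neighbourhoods see at most `r - 1`
colours gives such a homomorphism after padding each neighbourhood's colour set to exactly
`r - 1` colours, avoiding the vertex's own colour; this needs `r ≤ m`.
-/

/-- Vertices of the universal graph U(m,r): pairs (i,A) with |A| = r-1 and i ∉ A. -/
def UVert (m r : ℕ) : Type :=
  {p : Fin m × Finset (Fin m) // p.2.card = r - 1 ∧ p.1 ∉ p.2}

instance (m r : ℕ) : Fintype (UVert m r) := Subtype.fintype _
instance (m r : ℕ) : DecidableEq (UVert m r) := Subtype.instDecidableEq

/-- The universal graph U(m,r): (i,A) ~ (j,B) iff i ∈ B and j ∈ A. -/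
def Ugraph (m r : ℕ) : SimpleGraph (UVert m r) where
  Adj x y := x.val.1 ∈ y.val.2 ∧ y.val.1 ∈ x.val.2
  symm := ⟨fun x y h => ⟨h.2, h.1⟩⟩
  loopless := ⟨fun x h => x.property.2 h.1⟩

instance (m r : ℕ) : DecidableRel (Ugraph m r).Adj :=
  fun _ _ => inferInstanceAs (Decidable (_ ∧ _))

open Finset

theorem Finset.exists_superset_card_eq_of_notMem {α : Type*} [Fintype α] [DecidableEq α]
    {s : Finset α} {a : α} {k : ℕ} (ha : a ∉ s) (hs : #s ≤ k) (hk : k < Fintype.card α) :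
    ∃ A, s ⊆ A ∧ #A = k ∧ a ∉ A := by
  have hsub : s ⊆ {a}ᶜ := fun x hx => mem_compl.2 fun hxa => ha (mem_singleton.1 hxa ▸ hx)
  have hcompl : k ≤ #({a}ᶜ : Finset α) := by
    rw [card_compl, card_singleton]
    omega
  obtain ⟨A, hsA, hAa, hAk⟩ := exists_subsuperset_card_eq hsub hs hcompl
  exact ⟨A, hsA, hAk, fun h => mem_compl.1 (hAa h) (mem_singleton_self a)⟩

namespace Ugraph

variable {m r : ℕ}

theorem fst_ne_of_adj {x y : UVert m r} (h : (Ugraph m r).Adj x y) : x.val.1 ≠ y.val.1 :=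
  fun hxy => y.property.2 (hxy ▸ h.1)

theorem image_fst_neighborFinset_subset {V : Type*} [Fintype V] {G : SimpleGraph V}
    [DecidableRel G.Adj] (f : G →g Ugraph m r) (v : V) :
    (G.neighborFinset v).image (fun u => (f u).val.1) ⊆ (f v).val.2 := by
  intro x hx
  obtain ⟨u, hu, rfl⟩ := mem_image.1 hx
  exact (f.map_rel ((G.mem_neighborFinset v u).1 hu).symm).1

theorem exists_hom_of_coloring {V : Type*} [Fintype V] {G : SimpleGraph V} [DecidableRel G.Adj]
    (hrm : r ≤ m) (c : V → Fin m) (hproper : ∀ u v, G.Adj u v → c u ≠ c v)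
    (hloc : ∀ v, #((G.neighborFinset v).image c) + 1 ≤ r) :
    Nonempty (G →g Ugraph m r) := by
  have hpad : ∀ v, ∃ A, (G.neighborFinset v).image c ⊆ A ∧ #A = r - 1 ∧ c v ∉ A := by
    intro v
    refine exists_superset_card_eq_of_notMem ?_ (by have := hloc v; omega)
      (by rw [Fintype.card_fin]; have := hloc v; omega)
    intro hv
    obtain ⟨u, hu, huv⟩ := mem_image.1 hv
    exact hproper v u ((G.mem_neighborFinset v u).1 hu) huv.symm
  choose A hcolors hcard hown using hpad
  refine ⟨⟨fun v => ⟨(c v, A v), hcard v, hown v⟩, fun {u v} huv => ⟨?_, ?_⟩⟩⟩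
  · exact hcolors v (mem_image_of_mem c ((G.mem_neighborFinset v u).2 huv.symm))
  · exact hcolors u (mem_image_of_mem c ((G.mem_neighborFinset u v).2 huv))

end Ugraph

theorem stmt5_general {V : Type} [Fintype V] (G : SimpleGraph V)
    [DecidableRel G.Adj] (m r : ℕ) (hr : 1 ≤ r) (hrm : r ≤ m) :
    (∃ c : V → Fin m, (∀ u v, G.Adj u v → c u ≠ c v) ∧
        ∀ v, ((G.neighborFinset v).image c).card + 1 ≤ r) ↔
      Nonempty (G →g Ugraph m r) := by
  refine ⟨fun ⟨c, hproper, hloc⟩ => Ugraph.exists_hom_of_coloring hrm c hproper hloc, ?_⟩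
  rintro ⟨f⟩
  refine ⟨fun v => (f v).val.1, fun u v huv => Ugraph.fst_ne_of_adj (f.map_rel huv), fun v => ?_⟩
  have hcard := card_le_card (Ugraph.image_fst_neighborFinset_subset f v)
  rw [(f v).property.1] at hcard
  omega

/-- a finite graph G satisfies ψ(G) ≤ r attained by a proper coloring
using at most m colors iff there is a graph homomorphism G → U(m,r). -/
theorem stmt5 {V : Type} [Fintype V] [DecidableEq V] (G : SimpleGraph V)
    [DecidableRel G.Adj] (m r : ℕ) (hr : 1 ≤ r) (hrm : r ≤ m) :
    (∃ c : V → Fin m, (∀ u v, G.Adj u v → c u ≠ c v) ∧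
        ∀ v, ((G.neighborFinset v).image c).card + 1 ≤ r) ↔
      Nonempty (G →g Ugraph m r) :=
  stmt5_general G m r hr hrm
end

section
/- For positive integers r < m, the chromatic number of U(m,r) is strictly less than m. -/
/-!
Colouring each vertex (i, A) by i is proper, since an edge {(i,A),(j,B)} has i ∈ B ∌ j.
To save one colour ℓ, give each vertex (ℓ, A) a colour k ∉ A ∪ {ℓ}, which exists because
|A ∪ {ℓ}| = r < m. The new colouring is still proper: every vertex gets a colour outside its
own set, and of two adjacent vertices (i,A), (j,B) at least one, say (i,A), keeps its colour i,
which lies in B.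
-/

namespace UVert

variable {m r : ℕ}

theorem exists_ne_fst_notMem_snd (hr : 1 ≤ r) (hrm : r < m) (v : UVert m r) :
    ∃ k, k ≠ v.val.1 ∧ k ∉ v.val.2 := by
  have hcard : (insert v.val.1 v.val.2).card < (Finset.univ : Finset (Fin m)).card := by
    rw [Finset.card_insert_of_notMem v.prop.2, v.prop.1, Finset.card_univ, Fintype.card_fin]
    omega
  obtain ⟨k, -, hk⟩ := Finset.exists_mem_notMem_of_card_lt_card hcard
  exact ⟨k, fun h => hk (h ▸ Finset.mem_insert_self _ _),
    fun h => hk (Finset.mem_insert_of_mem h)⟩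

noncomputable def recolor (hr : 1 ≤ r) (hrm : r < m) (ℓ : Fin m) (v : UVert m r) : Fin m :=
  if v.val.1 = ℓ then (exists_ne_fst_notMem_snd hr hrm v).choose else v.val.1

variable (hr : 1 ≤ r) (hrm : r < m) (ℓ : Fin m) (v : UVert m r)

theorem recolor_of_fst_ne (hv : v.val.1 ≠ ℓ) : recolor hr hrm ℓ v = v.val.1 :=
  if_neg hv

theorem recolor_ne : recolor hr hrm ℓ v ≠ ℓ := by
  unfold recolor
  split_ifs with hv
  · exact hv ▸ (exists_ne_fst_notMem_snd hr hrm v).choose_spec.1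
  · exact hv

theorem recolor_notMem : recolor hr hrm ℓ v ∉ v.val.2 := by
  unfold recolor
  split_ifs
  · exact (exists_ne_fst_notMem_snd hr hrm v).choose_spec.2
  · exact v.prop.2

end UVert

namespace Ugraph

variable {m r : ℕ}

theorem fst_ne_of_adj_s6 {v w : UVert m r} (h : (Ugraph m r).Adj v w) : v.val.1 ≠ w.val.1 :=
  fun hvw => w.prop.2 (hvw ▸ h.1)

noncomputable def recoloring (hr : 1 ≤ r) (hrm : r < m) (ℓ : Fin m) :
    (Ugraph m r).Coloring {k : Fin m // k ≠ ℓ} :=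
  SimpleGraph.Coloring.mk (fun v => ⟨UVert.recolor hr hrm ℓ v, UVert.recolor_ne hr hrm ℓ v⟩)
    fun {v w} hvw heq => by
      have heq : UVert.recolor hr hrm ℓ v = UVert.recolor hr hrm ℓ w := congrArg Subtype.val heq
      by_cases hv : v.val.1 = ℓ
      · have hw : w.val.1 ≠ ℓ := hv ▸ (fst_ne_of_adj_s6 hvw).symm
        rw [UVert.recolor_of_fst_ne hr hrm ℓ w hw] at heq
        exact UVert.recolor_notMem hr hrm ℓ v (heq ▸ hvw.2)
      · rw [UVert.recolor_of_fst_ne hr hrm ℓ v hv] at heq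
        exact UVert.recolor_notMem hr hrm ℓ w (heq ▸ hvw.1)

theorem colorable_sub_one (hr : 1 ≤ r) (hrm : r < m) : (Ugraph m r).Colorable (m - 1) := by
  have hcol := (recoloring hr hrm ⟨0, by omega⟩).colorable
  simpa [Fintype.card_subtype_compl] using hcol

end Ugraph

/-- for 1 ≤ r < m, χ(U(m,r)) < m. -/
theorem stmt6 (m r : ℕ) (hr : 1 ≤ r) (hrm : r < m) :
    (Ugraph m r).chromaticNumber < (m : ℕ∞) :=
  calc (Ugraph m r).chromaticNumber ≤ (m - 1 : ℕ) :=
        (Ugraph.colorable_sub_one hr hrm).chromaticNumber_le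
    _ < (m : ℕ∞) := by exact_mod_cast Nat.sub_lt (by omega) one_pos
end

section
/- The geometric realization of the simplicial complex L_{2r-1,r} is homeomorphic to the sphere S^{2r-3} for r ≥ 1. -/
open Finset

/-- Geometric realization of the simplicial complex L_{m,r} (on vertex set
[m] × {1,2}, encoded as Fin m × Bool): points are barycentric-coordinate
functions whose support is a simplex S ⊎ T with S, T disjoint, |S| < r, |T| < r. -/
def LRealization (m r : ℕ) : Set ((Fin m × Bool) → ℝ) :=
  {f | (∀ x, 0 ≤ f x) ∧ (∑ x, f x) = 1 ∧
    ∃ S T : Finset (Fin m), Disjoint S T ∧ S.card < r ∧ T.card < r ∧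
      ∀ i : Fin m, (f (i, true) ≠ 0 → i ∈ S) ∧ (f (i, false) ≠ 0 → i ∈ T)}
/-- Existence of a "median" value t for w : ℝ^{2k+1}. -/
lemma exists_median (k : ℕ) (w : Fin (2*k+1) → ℝ) :
    ∃ t : ℝ, (univ.filter fun i => t < w i).card ≤ k ∧
             (univ.filter fun i => w i < t).card ≤ k := by
  classical
  have hne : (univ : Finset (Fin (2*k+1))).Nonempty :=
    ⟨⟨0, by omega⟩, mem_univ _⟩
  have himne : (univ.image w).Nonempty := hne.image w
  set Q := (univ.image w).filter
      (fun x => k+1 ≤ (univ.filter fun i => w i ≤ x).card) with hQdef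
  have hQne : Q.Nonempty := by
    refine ⟨(univ.image w).max' himne, ?_⟩
    rw [hQdef, mem_filter]
    refine ⟨max'_mem _ _, ?_⟩
    have hfull : (univ.filter fun i => w i ≤ (univ.image w).max' himne) = univ := by
      refine filter_true_of_mem fun i _ => ?_
      exact le_max' _ _ (mem_image_of_mem w (mem_univ i))
    rw [hfull, card_univ, Fintype.card_fin]
    omega
  set t := Q.min' hQne with htdef
  have htQ : t ∈ Q := min'_mem _ _
  rw [hQdef, mem_filter] at htQ
  obtain ⟨htQ1, htQ2⟩ := htQ
  have hcards := card_filter_add_card_filter_not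
    (s := (univ : Finset (Fin (2*k+1)))) (p := fun i => w i ≤ t)
  simp only [not_le] at hcards
  rw [card_univ, Fintype.card_fin] at hcards
  refine ⟨t, ?_, ?_⟩
  · have : (univ.filter fun i => ¬ w i ≤ t) = univ.filter fun i => t < w i := by
      simp [not_le]
    omega
  · by_contra hcon
    push_neg at hcon
    set B := univ.filter fun i => w i < t with hBdef
    have hBne : B.Nonempty := card_pos.mp (by omega)
    have hBimne : (B.image w).Nonempty := hBne.image w
    set s' := (B.image w).max' hBimne with hs'def
    obtain ⟨i₀, hi₀B, hi₀⟩ := mem_image.mp (max'_mem _ hBimne)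
    have hs'lt : s' < t := by
      show (B.image w).max' hBimne < t
      exact hi₀ ▸ (mem_filter.mp hi₀B).2
    have hsub : B ⊆ univ.filter fun i => w i ≤ s' := by
      intro i hi
      rw [mem_filter]
      exact ⟨mem_univ _, le_max' _ _ (mem_image_of_mem w hi)⟩
    have hs'Q : s' ∈ Q := by
      rw [hQdef, mem_filter]
      refine ⟨?_, le_trans hcon (card_le_card hsub)⟩
      show (B.image w).max' hBimne ∈ univ.image w
      exact hi₀ ▸ mem_image_of_mem w (mem_univ i₀)
    have := min'_le _ _ hs'Q
    rw [← htdef] at this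
    exact absurd (lt_of_le_of_lt this hs'lt) (lt_irrefl _)

/-- If v and v' both have ≤ k positive and ≤ k negative coordinates and
v' = c v + t pointwise with c > 0, then t = 0. -/
lemma median_shift_zero (k : ℕ) (v v' : Fin (2*k+1) → ℝ) (c t : ℝ) (hc : 0 < c)
    (h2 : (univ.filter fun i => v i < 0).card ≤ k)
    (h1' : (univ.filter fun i => 0 < v' i).card ≤ k)
    (h2' : (univ.filter fun i => v' i < 0).card ≤ k)
    (h1 : (univ.filter fun i => 0 < v i).card ≤ k)
    (h : ∀ i, v' i = c * v i + t) : t = 0 := by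
  classical
  rcases lt_trichotomy t 0 with ht | ht | ht
  · exfalso
    have hsub : (univ.filter fun i => v i ≤ 0) ⊆ univ.filter fun i => v' i < 0 := by
      intro i hi
      rw [mem_filter] at hi ⊢
      refine ⟨mem_univ _, ?_⟩
      rw [h i]
      nlinarith [hi.2]
    have hcards := card_filter_add_card_filter_not
      (s := (univ : Finset (Fin (2*k+1)))) (p := fun i => v i ≤ 0)
    simp only [not_le] at hcards
    rw [card_univ, Fintype.card_fin] at hcards
    have := card_le_card hsub
    omega
  · exact ht
  · exfalso
    have hsub : (univ.filter fun i => 0 ≤ v i) ⊆ univ.filter fun i => 0 < v' i := by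
      intro i hi
      rw [mem_filter] at hi ⊢
      refine ⟨mem_univ _, ?_⟩
      rw [h i]
      nlinarith [hi.2]
    have hcards := card_filter_add_card_filter_not
      (s := (univ : Finset (Fin (2*k+1)))) (p := fun i => 0 ≤ v i)
    simp only [not_le] at hcards
    rw [card_univ, Fintype.card_fin] at hcards
    have := card_le_card hsub
    omega

lemma isClosed_LReal (m r : ℕ) : IsClosed (LRealization m r) := by
  classical
  have hrw : LRealization m r =
      ((⋂ x, {f : (Fin m × Bool) → ℝ | 0 ≤ f x}) ∩ {f | (∑ x, f x) = 1}) ∩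
      ⋃ ST : Finset (Fin m) × Finset (Fin m),
        {f : (Fin m × Bool) → ℝ | Disjoint ST.1 ST.2 ∧ ST.1.card < r ∧ ST.2.card < r ∧
          ∀ i : Fin m, (f (i, true) ≠ 0 → i ∈ ST.1) ∧ (f (i, false) ≠ 0 → i ∈ ST.2)} := by
    ext f
    simp only [LRealization, Set.mem_setOf_eq, Set.mem_inter_iff, Set.mem_iInter,
      Set.mem_iUnion, Prod.exists]
    tauto
  rw [hrw]
  refine IsClosed.inter (IsClosed.inter ?_ ?_) ?_
  · exact isClosed_iInter fun x => isClosed_le continuous_const (continuous_apply x)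
  · exact isClosed_eq (by fun_prop) continuous_const
  · refine isClosed_iUnion_of_finite fun ST => ?_
    by_cases h : Disjoint ST.1 ST.2 ∧ ST.1.card < r ∧ ST.2.card < r
    · have : {f : (Fin m × Bool) → ℝ | Disjoint ST.1 ST.2 ∧ ST.1.card < r ∧ ST.2.card < r ∧
          ∀ i : Fin m, (f (i, true) ≠ 0 → i ∈ ST.1) ∧ (f (i, false) ≠ 0 → i ∈ ST.2)} =
          ⋂ i : Fin m, ({f : (Fin m × Bool) → ℝ | f (i, true) ≠ 0 → i ∈ ST.1} ∩
            {f | f (i, false) ≠ 0 → i ∈ ST.2}) := by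
        ext f
        simp only [Set.mem_setOf_eq, Set.mem_iInter, Set.mem_inter_iff]
        constructor
        · rintro ⟨-, -, -, h4⟩ i
          exact h4 i
        · intro h4
          exact ⟨h.1, h.2.1, h.2.2, h4⟩
      rw [this]
      refine isClosed_iInter fun i => IsClosed.inter ?_ ?_
      · by_cases hi : i ∈ ST.1
        · have : {f : (Fin m × Bool) → ℝ | f (i, true) ≠ 0 → i ∈ ST.1} = Set.univ := by
            ext f; simp [hi]
          rw [this]; exact isClosed_univ
        · have : {f : (Fin m × Bool) → ℝ | f (i, true) ≠ 0 → i ∈ ST.1} =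
              {f | f (i, true) = 0} := by
            ext f; simp [hi]
          rw [this]; exact isClosed_eq (continuous_apply _) continuous_const
      · by_cases hi : i ∈ ST.2
        · have : {f : (Fin m × Bool) → ℝ | f (i, false) ≠ 0 → i ∈ ST.2} = Set.univ := by
            ext f; simp [hi]
          rw [this]; exact isClosed_univ
        · have : {f : (Fin m × Bool) → ℝ | f (i, false) ≠ 0 → i ∈ ST.2} =
              {f | f (i, false) = 0} := by
            ext f; simp [hi]
          rw [this]; exact isClosed_eq (continuous_apply _) continuous_const
    · have : {f : (Fin m × Bool) → ℝ | Disjoint ST.1 ST.2 ∧ ST.1.card < r ∧ ST.2.card < r ∧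
          ∀ i : Fin m, (f (i, true) ≠ 0 → i ∈ ST.1) ∧ (f (i, false) ≠ 0 → i ∈ ST.2)} = ∅ := by
        ext f
        simp only [Set.mem_setOf_eq, Set.mem_empty_iff_false, iff_false]
        tauto
      rw [this]; exact isClosed_empty

lemma isCompact_LReal (m r : ℕ) : IsCompact (LRealization m r) := by
  refine IsCompact.of_isClosed_subset (isCompact_univ_pi fun _ => isCompact_Icc
    (a := (0:ℝ)) (b := 1)) (isClosed_LReal m r) ?_
  rintro f ⟨hpos, hsum, -⟩ 
  intro x _
  refine ⟨hpos x, ?_⟩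
  calc f x ≤ ∑ y, f y := Finset.single_le_sum (fun y _ => hpos y) (mem_univ x)
  _ = 1 := hsum



variable {k : ℕ}

/-- The signed coordinate map. -/
noncomputable def Fv (f : (Fin (2*k+1) × Bool) → ℝ) : Fin (2*k+1) → ℝ :=
  fun i => f (i, true) - f (i, false)

lemma LReal_props (f : (Fin (2*k+1) × Bool) → ℝ)
    (hf : f ∈ LRealization (2*k+1) (k+1)) :
    (∑ i, |Fv f i|) = 1 ∧
    (univ.filter fun i => 0 < Fv f i).card ≤ k ∧
    (univ.filter fun i => Fv f i < 0).card ≤ k ∧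
    (∀ i, f (i, true) = max (Fv f i) 0 ∧ f (i, false) = max (-(Fv f i)) 0) := by
  obtain ⟨hpos, hsum, S, T, hST, hS, hT, hsupp⟩ := hf
  have hkey : ∀ i : Fin (2*k+1), f (i, true) = 0 ∨ f (i, false) = 0 := by
    intro i
    by_cases h : f (i, true) = 0
    · exact Or.inl h
    · refine Or.inr ?_
      by_contra h'
      exact (Finset.disjoint_left.mp hST ((hsupp i).1 h)) ((hsupp i).2 h')
  have habs : ∀ i, |Fv f i| = f (i, true) + f (i, false) := by
    intro i
    rcases hkey i with h | h
    · rw [Fv, h]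
      rw [zero_sub, abs_neg, abs_of_nonneg (hpos _), zero_add]
    · rw [Fv, h]
      rw [sub_zero, abs_of_nonneg (hpos _), add_zero]
  have hmax : ∀ i, f (i, true) = max (Fv f i) 0 ∧ f (i, false) = max (-(Fv f i)) 0 := by
    intro i
    rcases hkey i with h | h
    · rw [Fv, h, zero_sub, neg_neg]
      constructor
      · rw [max_eq_right (neg_nonpos_of_nonneg (hpos _))]
      · rw [max_eq_left (hpos _)]
    · rw [Fv, h, sub_zero]
      constructor
      · rw [max_eq_left (hpos _)]
      · rw [max_eq_right (neg_nonpos_of_nonneg (hpos _))]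
  refine ⟨?_, ?_, ?_, hmax⟩
  · rw [Fintype.sum_congr _ _ habs]
    rw [← hsum, Fintype.sum_prod_type]
    refine Fintype.sum_congr _ _ fun i => ?_
    rw [Fintype.sum_bool]
  · refine le_trans (card_le_card ?_) (Nat.lt_succ_iff.mp hS)
    intro i hi
    rw [mem_filter] at hi
    refine (hsupp i).1 ?_
    have := hi.2
    rw [Fv] at this
    intro h0
    rw [h0, zero_sub] at this
    exact absurd this (not_lt.mpr (neg_nonpos_of_nonneg (hpos _)))
  · refine le_trans (card_le_card ?_) (Nat.lt_succ_iff.mp hT)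
    intro i hi
    rw [mem_filter] at hi
    refine (hsupp i).2 ?_
    have := hi.2
    rw [Fv] at this
    intro h0
    rw [h0, sub_zero] at this
    exact absurd this (not_lt.mpr (hpos _))

/-- A function with ≤ k positive and ≤ k negative coordinates and ℓ¹-norm 1
cannot be constant. -/
lemma not_const (v : Fin (2*k+1) → ℝ) (hsum : (∑ i, |v i|) = 1)
    (h1 : (univ.filter fun i => 0 < v i).card ≤ k)
    (h2 : (univ.filter fun i => v i < 0).card ≤ k)
    (c : ℝ) (hc : ∀ i, v i = c) : False := by
  rcases lt_trichotomy c 0 with h | h | h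
  · have : (univ.filter fun i => v i < 0) = univ := by
      refine filter_true_of_mem fun i _ => ?_
      rw [hc i]; exact h
    rw [this, card_univ, Fintype.card_fin] at h2
    omega
  · have : (∑ i, |v i|) = 0 := by
      refine Finset.sum_eq_zero fun i _ => ?_
      rw [hc i, h, abs_zero]
    rw [this] at hsum
    norm_num at hsum
  · have : (univ.filter fun i => 0 < v i) = univ := by
      refine filter_true_of_mem fun i _ => ?_
      rw [hc i]; exact h
    rw [this, card_univ, Fintype.card_fin] at h1
    omega

noncomputable def sumL (k : ℕ) : ((Fin (2*k+1) → ℝ) →ₗ[ℝ] ℝ) where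
  toFun v := ∑ i, v i
  map_add' v w := by simp [Finset.sum_add_distrib]
  map_smul' c v := by simp [Finset.mul_sum]

lemma nreal_ne (k : ℕ) : (((2*k+1 : ℕ)) : ℝ) ≠ 0 := by positivity

noncomputable def prH (k : ℕ) (v : Fin (2*k+1) → ℝ) : LinearMap.ker (sumL k) :=
  ⟨fun i => v i - (∑ j, v j) / ((2*k+1 : ℕ) : ℝ), by
    rw [LinearMap.mem_ker]
    show (∑ i, (v i - (∑ j, v j) / ((2*k+1 : ℕ) : ℝ))) = 0
    rw [Finset.sum_sub_distrib, Finset.sum_const, card_univ, Fintype.card_fin,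
      nsmul_eq_mul, mul_div_cancel₀ _ (nreal_ne k), sub_self]⟩

lemma prH_apply (k : ℕ) (v : Fin (2*k+1) → ℝ) (i : Fin (2*k+1)) :
    (prH k v : Fin (2*k+1) → ℝ) i = v i - (∑ j, v j) / ((2*k+1 : ℕ) : ℝ) := rfl

lemma sumL_surj (k : ℕ) : Function.Surjective (sumL k) := by
  intro c
  refine ⟨fun _ => c / ((2*k+1 : ℕ) : ℝ), ?_⟩
  show (∑ _i : Fin (2*k+1), c / ((2*k+1 : ℕ) : ℝ)) = c
  rw [Finset.sum_const, card_univ, Fintype.card_fin, nsmul_eq_mul,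
    mul_div_cancel₀ _ (nreal_ne k)]

lemma finrank_ker (k : ℕ) : Module.finrank ℝ (LinearMap.ker (sumL k)) = 2*k := by
  have h1 := LinearMap.finrank_range_add_finrank_ker (sumL k)
  rw [LinearMap.range_eq_top.mpr (sumL_surj k), finrank_top, Module.finrank_self,
    Module.finrank_pi, Fintype.card_fin] at h1
  omega

noncomputable def eEquiv (k : ℕ) :
    EuclideanSpace ℝ (Fin (2*k)) ≃L[ℝ] LinearMap.ker (sumL k) :=
  (LinearEquiv.ofFinrankEq _ _ (by
    rw [finrank_ker, finrank_euclideanSpace_fin])).toContinuousLinearEquiv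

noncomputable def Amap (k : ℕ) (v : Fin (2*k+1) → ℝ) : EuclideanSpace ℝ (Fin (2*k)) :=
  (eEquiv k).symm (prH k v)

lemma continuous_Amap (k : ℕ) : Continuous (Amap k) := by
  refine (eEquiv k).symm.continuous.comp (Continuous.subtype_mk ?_ _)
  refine continuous_pi fun i => (continuous_apply i).sub ?_
  exact (continuous_finset_sum _ fun j _ => continuous_apply j).div_const _

lemma Amap_eq_zero (k : ℕ) (v : Fin (2*k+1) → ℝ) (h : Amap k v = 0) :
    ∀ i, v i = (∑ j, v j) / ((2*k+1 : ℕ) : ℝ) := by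
  have h0 : prH k v = 0 := by
    refine (eEquiv k).symm.injective ?_
    rw [map_zero]
    exact h
  intro i
  have := congrFun (congrArg (Subtype.val) h0) i
  rw [prH_apply] at this
  simpa [sub_eq_zero] using this

lemma Amap_smul_rel (k : ℕ) (v v' : Fin (2*k+1) → ℝ) (c : ℝ)
    (h : Amap k v' = c • Amap k v) :
    ∃ t : ℝ, ∀ i, v' i = c * v i + t := by
  have h0 : prH k v' = c • prH k v := by
    refine (eEquiv k).symm.injective ?_
    rw [map_smul]
    exact h
  refine ⟨(∑ j, v' j) / ((2*k+1 : ℕ) : ℝ) - c * ((∑ j, v j) / ((2*k+1 : ℕ) : ℝ)), ?_⟩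
  intro i
  have := congrFun (congrArg (Subtype.val) h0) i
  rw [prH_apply] at this
  have h2 : (((c • prH k v) : LinearMap.ker (sumL k)) : Fin (2*k+1) → ℝ) i
      = c * (v i - (∑ j, v j) / ((2*k+1 : ℕ) : ℝ)) := by
    rw [Submodule.coe_smul]
    simp [prH_apply]
  rw [h2] at this
  linarith [this]

lemma max_add_max_neg (a : ℝ) : max a 0 + max (-a) 0 = |a| := by
  rcases le_total 0 a with h | h
  · rw [max_eq_left h, max_eq_right (neg_nonpos_of_nonneg h), add_zero, abs_of_nonneg h]
  · rw [max_eq_right h, max_eq_left (neg_nonneg_of_nonpos h), zero_add, abs_of_nonpos h]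
theorem main_homeo (k : ℕ) :
    Nonempty ((LRealization (2*k+1) (k+1)) ≃ₜ
      Metric.sphere (0 : EuclideanSpace ℝ (Fin (2*k))) 1) := by
  classical
  -- nonvanishing of Amap ∘ Fv on LRealization
  have hA0 : ∀ f : (Fin (2*k+1) × Bool) → ℝ, f ∈ LRealization (2*k+1) (k+1) →
      Amap k (Fv f) ≠ 0 := by
    intro f hf hA
    obtain ⟨hsum1, hp, hn, -⟩ := LReal_props f hf
    exact not_const (Fv f) hsum1 hp hn _ (Amap_eq_zero k (Fv f) hA)
  -- the map
  set Φ : (LRealization (2*k+1) (k+1)) →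
      (Metric.sphere (0 : EuclideanSpace ℝ (Fin (2*k))) 1) := fun f =>
    ⟨‖Amap k (Fv f.1)‖⁻¹ • Amap k (Fv f.1), by
      rw [mem_sphere_zero_iff_norm, norm_smul, norm_inv, norm_norm,
        inv_mul_cancel₀ (norm_ne_zero_iff.mpr (hA0 f.1 f.2))]⟩ with hΦdef
  have hΦcont : Continuous Φ := by
    refine Continuous.subtype_mk ?_ _
    have hFv : Continuous fun f : (LRealization (2*k+1) (k+1)) => Fv f.1 := by
      refine continuous_pi fun i => ?_
      show Continuous fun f : (LRealization (2*k+1) (k+1)) => f.1 (i, true) - f.1 (i, false)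
      exact ((continuous_apply _).comp continuous_subtype_val).sub
        ((continuous_apply _).comp continuous_subtype_val)
    have hAc : Continuous fun f : (LRealization (2*k+1) (k+1)) => Amap k (Fv f.1) :=
      (continuous_Amap k).comp hFv
    exact Continuous.smul (hAc.norm.inv₀ fun f => norm_ne_zero_iff.mpr (hA0 f.1 f.2)) hAc
  have hΦinj : Function.Injective Φ := by
    intro f f' heq
    have heq' : ‖Amap k (Fv f.1)‖⁻¹ • Amap k (Fv f.1)
        = ‖Amap k (Fv f'.1)‖⁻¹ • Amap k (Fv f'.1) := congrArg Subtype.val heq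
    set a := Amap k (Fv f.1) with ha
    set a' := Amap k (Fv f'.1) with ha'
    have hna : ‖a‖ ≠ 0 := norm_ne_zero_iff.mpr (hA0 f.1 f.2)
    have hna' : ‖a'‖ ≠ 0 := norm_ne_zero_iff.mpr (hA0 f'.1 f'.2)
    have hrel : a' = (‖a'‖ * ‖a‖⁻¹) • a := by
      rw [← smul_smul]
      rw [heq']
      rw [smul_smul, mul_inv_cancel₀ hna', one_smul]
    set c : ℝ := ‖a'‖ * ‖a‖⁻¹ with hcdef
    have hc : 0 < c := by
      refine mul_pos ?_ ?_
      · exact lt_of_le_of_ne (norm_nonneg _) (Ne.symm hna')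
      · exact inv_pos.mpr (lt_of_le_of_ne (norm_nonneg _) (Ne.symm hna))
    obtain ⟨t, hvt⟩ := Amap_smul_rel k (Fv f.1) (Fv f'.1) c hrel
    obtain ⟨hsum1, hp, hn, hmax⟩ := LReal_props f.1 f.2
    obtain ⟨hsum1', hp', hn', hmax'⟩ := LReal_props f'.1 f'.2
    have ht0 : t = 0 := median_shift_zero k (Fv f.1) (Fv f'.1) c t hc hn hp' hn' hp hvt
    rw [ht0] at hvt
    have hc1 : c = 1 := by
      have : (∑ i, |Fv f'.1 i|) = c * ∑ i, |Fv f.1 i| := by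
        rw [Finset.mul_sum]
        refine Finset.sum_congr rfl fun i _ => ?_
        rw [hvt i, add_zero, abs_mul, abs_of_pos hc]
      rw [hsum1, hsum1', mul_one] at this
      exact this.symm
    have hveq : Fv f'.1 = Fv f.1 := by
      funext i
      rw [hvt i, hc1, one_mul, add_zero]
    have : f.1 = f'.1 := by
      funext x
      obtain ⟨i, b⟩ := x
      cases b
      · rw [(hmax i).2, (hmax' i).2, hveq]
      · rw [(hmax i).1, (hmax' i).1, hveq]
    exact Subtype.ext this
  have hΦsurj : Function.Surjective Φ := by
    rintro ⟨u, hu⟩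
    rw [mem_sphere_zero_iff_norm] at hu
    set w : Fin (2*k+1) → ℝ := ((eEquiv k u : LinearMap.ker (sumL k)) : Fin (2*k+1) → ℝ)
      with hwdef
    have hwsum : (∑ i, w i) = 0 := (eEquiv k u).2
    have hune : u ≠ 0 := by
      intro h0
      rw [h0, norm_zero] at hu
      norm_num at hu
    obtain ⟨t, ht1, ht2⟩ := exists_median k w
    set c : ℝ := ∑ i, |w i - t| with hcdef
    have hex : ∃ i, w i - t ≠ 0 := by
      by_contra hcon
      push_neg at hcon
      have hwt : ∀ i, w i = t := fun i => by linarith [sub_eq_zero.mp (hcon i)]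
      have : ((2*k+1 : ℕ) : ℝ) * t = 0 := by
        rw [← hwsum]
        rw [Finset.sum_congr rfl fun i _ => hwt i, Finset.sum_const, card_univ,
          Fintype.card_fin, nsmul_eq_mul]
      have ht0 : t = 0 := by
        rcases mul_eq_zero.mp this with h | h
        · exact absurd h (nreal_ne k)
        · exact h
      have hw0 : (eEquiv k u) = 0 := by
        refine Subtype.ext ?_
        funext i
        show w i = 0
        rw [hwt i, ht0]
      exact hune ((eEquiv k).map_eq_zero_iff.mp hw0)
    have hc : 0 < c := by
      obtain ⟨i0, hi0⟩ := hex
      refine Finset.sum_pos' (fun i _ => abs_nonneg _) ⟨i0, mem_univ _, abs_pos.mpr hi0⟩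
    set v : Fin (2*k+1) → ℝ := fun i => (w i - t) / c with hvdef
    have hposiff : ∀ i, (0 < v i ↔ t < w i) := by
      intro i
      constructor
      · intro h
        have := mul_pos h hc
        rw [hvdef] at this
        simp only at this
        rw [div_mul_cancel₀ _ (ne_of_gt hc)] at this
        linarith
      · intro h
        exact div_pos (by linarith) hc
    have hnegiff : ∀ i, (v i < 0 ↔ w i < t) := by
      intro i
      constructor
      · intro h
        have := mul_neg_of_neg_of_pos h hc
        rw [hvdef] at this
        simp only at this
        rw [div_mul_cancel₀ _ (ne_of_gt hc)] at this
        linarith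
      · intro h
        exact div_neg_of_neg_of_pos (by linarith) hc
    set f : (Fin (2*k+1) × Bool) → ℝ := fun x =>
      if x.2 = true then max (v x.1) 0 else max (-(v x.1)) 0 with hfdef
    have hftrue : ∀ i, f (i, true) = max (v i) 0 := fun i => rfl
    have hffalse : ∀ i, f (i, false) = max (-(v i)) 0 := fun i => rfl
    have hfv : Fv f = v := by
      funext i
      show f (i, true) - f (i, false) = v i
      rw [hftrue, hffalse]
      rcases le_total 0 (v i) with h | h
      · rw [max_eq_left h, max_eq_right (neg_nonpos_of_nonneg h), sub_zero]
      · rw [max_eq_right h, max_eq_left (neg_nonneg_of_nonpos h), zero_sub, neg_neg]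
    have hfmem : f ∈ LRealization (2*k+1) (k+1) := by
      refine ⟨?_, ?_, univ.filter (fun i => 0 < v i), univ.filter (fun i => v i < 0),
        ?_, ?_, ?_, ?_⟩
      · intro x
        obtain ⟨i, b⟩ := x
        cases b
        · exact le_max_right _ _
        · exact le_max_right _ _
      · rw [Fintype.sum_prod_type]
        have : ∀ i : Fin (2*k+1), (∑ b : Bool, f (i, b)) = |v i| := by
          intro i
          rw [Fintype.sum_bool, hftrue, hffalse, max_add_max_neg]
        rw [Fintype.sum_congr _ _ this]
        have : ∀ i : Fin (2*k+1), |v i| = |w i - t| / c := by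
          intro i
          rw [hvdef]
          simp only
          rw [abs_div, abs_of_pos hc]
        rw [Fintype.sum_congr _ _ this, ← Finset.sum_div, ← hcdef, div_self (ne_of_gt hc)]
      · rw [Finset.disjoint_left]
        intro i hi hi'
        rw [mem_filter] at hi hi'
        exact absurd hi'.2 (not_lt.mpr (le_of_lt hi.2))
      · rw [Nat.lt_succ_iff]
        refine le_trans (le_of_eq (congrArg card ?_)) ht1
        ext i
        simp only [mem_filter, mem_univ, true_and]
        exact hposiff i
      · rw [Nat.lt_succ_iff]
        refine le_trans (le_of_eq (congrArg card ?_)) ht2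
        ext i
        simp only [mem_filter, mem_univ, true_and]
        exact hnegiff i
      · intro i
        constructor
        · intro hne
          rw [hftrue] at hne
          rw [mem_filter]
          refine ⟨mem_univ _, ?_⟩
          by_contra hnot
          rw [not_lt] at hnot
          exact hne (max_eq_right hnot)
        · intro hne
          rw [hffalse] at hne
          rw [mem_filter]
          refine ⟨mem_univ _, ?_⟩
          by_contra hnot
          rw [not_lt] at hnot
          exact hne (max_eq_right (neg_nonpos_of_nonneg hnot))
    refine ⟨⟨f, hfmem⟩, ?_⟩
    -- compute Φ ⟨f, hfmem⟩ = u
    have hsumv : (∑ j, v j) = -(((2*k+1 : ℕ) : ℝ) * t) / c := by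
      rw [hvdef]
      simp only
      rw [← Finset.sum_div, Finset.sum_sub_distrib, hwsum, Finset.sum_const, card_univ,
        Fintype.card_fin, nsmul_eq_mul, zero_sub]
    have hpr : prH k v = c⁻¹ • (eEquiv k u) := by
      refine Subtype.ext ?_
      funext i
      rw [prH_apply, hsumv]
      show v i - _ = c⁻¹ * w i
      rw [hvdef]
      simp only
      field_simp
      ring
    have hAval : Amap k (Fv f) = c⁻¹ • u := by
      rw [hfv, Amap, hpr, map_smul, (eEquiv k).symm_apply_apply]
    refine Subtype.ext ?_
    show ‖Amap k (Fv f)‖⁻¹ • Amap k (Fv f) = u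
    rw [hAval, norm_smul, norm_inv, Real.norm_eq_abs, abs_of_pos hc, hu, mul_one,
      inv_inv, smul_smul, mul_inv_cancel₀ (ne_of_gt hc), one_smul]
  have hcomp : CompactSpace (LRealization (2*k+1) (k+1)) :=
    isCompact_iff_compactSpace.mp (isCompact_LReal _ _)
  refine ⟨Continuous.homeoOfEquivCompactToT2
    (f := Equiv.ofBijective Φ ⟨hΦinj, hΦsurj⟩) ?_⟩
  exact hΦcont

/-- ||L_{2r-1,r}|| is homeomorphic to the sphere S^{2r-3} for r ≥ 1
(the sphere of dimension 2r-3, i.e. the unit sphere of ℝ^{2r-2}). -/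
theorem stmt8 (r : ℕ) (hr : 1 ≤ r) :
    Nonempty ((LRealization (2 * r - 1) r) ≃ₜ
      Metric.sphere (0 : EuclideanSpace ℝ (Fin (2 * r - 2))) 1) := by
  obtain ⟨k, rfl⟩ : ∃ k, r = k + 1 := ⟨r - 1, by omega⟩
  have h1 : 2 * (k + 1) - 1 = 2 * k + 1 := by omega
  have h2 : 2 * (k + 1) - 2 = 2 * k := by omega
  rw [h1, h2]
  exact main_homeo k
end

section
/- Suppose S^h is covered by finitely many closed sets, none containing an antipodal pair of points, with no point covered more than l times. Then there exists a continuous map g from S^h to the geometric realization of a finite simplicial complex of dimension at most l−1 such that g(x) ≠ g(−x) for all x ∈ S^h. -/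
/-- The d-dimensional sphere, as unit sphere of ℝ^{d+1}. -/
abbrev Ssphere (d : ℕ) := Metric.sphere (0 : EuclideanSpace ℝ (Fin (d + 1))) 1

/-- The antipodal involution of the sphere. -/
def sphereNeg (d : ℕ) (x : Ssphere d) : Ssphere d :=
  ⟨-x.val, by simp [x.property]⟩

/-- The Z₂-index: the least d such that there is a Z₂-map to S^d. -/
noncomputable def z2ind {X : Type} [TopologicalSpace X] (ν : X → X) : ℕ∞ :=
  sInf {e : ℕ∞ | ∃ d : ℕ, e = d ∧
    ∃ f : X → Ssphere d, Continuous f ∧ ∀ x, f (ν x) = sphereNeg d (f x)}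

/-- The Z₂-coindex: the largest d such that there is a Z₂-map from S^d. -/
noncomputable def z2coind {X : Type} [TopologicalSpace X] (ν : X → X) : ℕ∞ :=
  sSup {e : ℕ∞ | ∃ d : ℕ, e = d ∧
    ∃ f : Ssphere d → X, Continuous f ∧ ∀ x, f (sphereNeg d x) = ν (f x)}

/-- Geometric realization of the finite simplicial complex with maximal simplices
(among) K, on vertex set Fin n: barycentric-coordinate functions whose support is
contained in some simplex of K. -/
def realization (n : ℕ) (K : Finset (Finset (Fin n))) : Set (Fin n → ℝ) :=
  {f | (∀ i, 0 ≤ f i) ∧ (∑ i, f i) = 1 ∧ ∃ s ∈ K, ∀ i, f i ≠ 0 → i ∈ s}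

/-- A continuous positive function on a nonempty compact space is bounded below
by a positive constant. -/
lemma pos_min_aux {X : Type} [TopologicalSpace X] [CompactSpace X] [Nonempty X]
    {f : X → ℝ} (hf : Continuous f) (hpos : ∀ x, 0 < f x) :
    ∃ ε > 0, ∀ x, ε ≤ f x := by
  obtain ⟨x, -, hx⟩ := isCompact_univ.exists_isMinOn Set.univ_nonempty hf.continuousOn
  exact ⟨f x, hpos x, fun y => hx (Set.mem_univ y)⟩

/-- The antipodal map is continuous. -/
lemma continuous_sphereNeg (d : ℕ) : Continuous (sphereNeg d) :=
  Continuous.subtype_mk (continuous_neg.comp continuous_subtype_val) _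

/-- a finite closed antipodal-free cover of S^h with multiplicity at
most l yields a continuous map g to the realization of a finite simplicial complex
of dimension at most l-1 (simplices have at most l vertices) with g(x) ≠ g(-x). -/
theorem stmt13 (h l m : ℕ) (A : Fin m → Set (Ssphere h))
    (hclosed : ∀ i, IsClosed (A i))
    (hcover : ∀ x, ∃ i, x ∈ A i)
    (hanti : ∀ i x, x ∈ A i → sphereNeg h x ∉ A i)
    (hmult : ∀ x, {i | x ∈ A i}.ncard ≤ l) :
    ∃ (n : ℕ) (K : Finset (Finset (Fin n))), (∀ s ∈ K, s.card ≤ l) ∧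
      ∃ g : Ssphere h → (Fin n → ℝ), Continuous g ∧
        (∀ x, g x ∈ realization n K) ∧
        ∀ x, g x ≠ g (sphereNeg h x) := by
  classical
  haveI : Nonempty (Ssphere h) :=
    (NormedSpace.sphere_nonempty.mpr (by norm_num)).to_subtype
  set ν := sphereNeg h with hν
  -- membership via infDist
  have hmem : ∀ (i : Fin m) (x : Ssphere h), (A i).Nonempty →
      Metric.infDist x (A i) = 0 → x ∈ A i := fun i x hne h0 =>
    ((hclosed i).mem_iff_infDist_zero hne).mpr h0
  -- ε for the antipodal separation, per index i
  have hAnti : ∀ i : Fin m, ∃ ε > 0, ∀ x, (A i).Nonempty →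
      ε ≤ Metric.infDist x (A i) + Metric.infDist (ν x) (A i) := by
    intro i
    by_cases hne : (A i).Nonempty
    · have hcont : Continuous fun x : Ssphere h =>
          Metric.infDist x (A i) + Metric.infDist (ν x) (A i) :=
        (Metric.continuous_infDist_pt (A i)).add
          ((Metric.continuous_infDist_pt (A i)).comp (continuous_sphereNeg h))
      have hpos : ∀ x : Ssphere h,
          0 < Metric.infDist x (A i) + Metric.infDist (ν x) (A i) := by
        intro x
        rcases lt_or_eq_of_le (add_nonneg (Metric.infDist_nonneg)
          (Metric.infDist_nonneg) :
            (0:ℝ) ≤ Metric.infDist x (A i) + Metric.infDist (ν x) (A i)) with hlt | heq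
        · exact hlt
        · exfalso
          have h1 : Metric.infDist x (A i) = 0 := le_antisymm
            (by nlinarith [Metric.infDist_nonneg (x := ν x) (s := A i)])
            Metric.infDist_nonneg
          have h2 : Metric.infDist (ν x) (A i) = 0 := by linarith [heq.symm, h1]
          exact hanti i x (hmem i x hne h1) (hmem i (ν x) hne h2)
      obtain ⟨ε, hε, hεle⟩ := pos_min_aux hcont hpos
      exact ⟨ε, hε, fun x _ => hεle x⟩
    · exact ⟨1, one_pos, fun x hx => absurd hx hne⟩
  -- ε for the multiplicity bound, per (l+1)-subset S
  have hMult : ∀ S : Finset (Fin m), ∃ ε > 0,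
      (S.card = l + 1 → (∀ i ∈ S, (A i).Nonempty) →
        ∀ x, ε ≤ ∑ i ∈ S, Metric.infDist x (A i)) := by
    intro S
    by_cases hgood : S.card = l + 1 ∧ ∀ i ∈ S, (A i).Nonempty
    · have hcont : Continuous fun x : Ssphere h =>
          ∑ i ∈ S, Metric.infDist x (A i) :=
        continuous_finset_sum _ fun i _ => Metric.continuous_infDist_pt (A i)
      have hpos : ∀ x : Ssphere h, 0 < ∑ i ∈ S, Metric.infDist x (A i) := by
        intro x
        rcases (Finset.sum_nonneg fun i _ =>
            (Metric.infDist_nonneg : (0:ℝ) ≤ Metric.infDist x (A i))).lt_or_eq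
          with hlt | heq
        · exact hlt
        · exfalso
          have hz : ∀ i ∈ S, Metric.infDist x (A i) = 0 :=
            (Finset.sum_eq_zero_iff_of_nonneg fun i _ =>
              Metric.infDist_nonneg).mp heq.symm
          have hsub : (↑S : Set (Fin m)) ⊆ {i | x ∈ A i} := fun i hi =>
            hmem i x (hgood.2 i hi) (hz i hi)
          have hfin : {i : Fin m | x ∈ A i}.Finite := Set.toFinite _
          have := Set.ncard_le_ncard hsub hfin
          rw [Set.ncard_coe_finset, hgood.1] at this
          exact absurd (this.trans (hmult x)) (by omega)
      obtain ⟨ε, hε, hεle⟩ := pos_min_aux hcont hpos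
      exact ⟨ε, hε, fun _ _ x => hεle x⟩
    · exact ⟨1, one_pos, fun h1 h2 => absurd ⟨h1, h2⟩ hgood⟩
  choose εa hεa hεa' using hAnti
  choose εs hεs hεs' using hMult
  -- the global ε
  set F : Finset ℝ :=
    insert 1 ((Finset.univ.image εa) ∪ (Finset.univ.powerset.image εs)) with hF
  have hFne : F.Nonempty := ⟨1, Finset.mem_insert_self _ _⟩
  set ε0 : ℝ := F.min' hFne with hε0
  have hFpos : ∀ y ∈ F, 0 < y := by
    intro y hy
    rcases Finset.mem_insert.mp hy with h1 | h2
    · exact h1 ▸ one_pos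
    · rcases Finset.mem_union.mp h2 with h3 | h3
      · obtain ⟨i, -, hi⟩ := Finset.mem_image.mp h3; exact hi ▸ hεa i
      · obtain ⟨S, -, hS⟩ := Finset.mem_image.mp h3; exact hS ▸ hεs S
  have hε0pos : 0 < ε0 := hFpos _ (F.min'_mem hFne)
  have hε0a : ∀ i, ε0 ≤ εa i := fun i =>
    F.min'_le _ (Finset.mem_insert_of_mem (Finset.mem_union_left _
      (Finset.mem_image_of_mem εa (Finset.mem_univ i))))
  have hε0s : ∀ S : Finset (Fin m), ε0 ≤ εs S := fun S =>
    F.min'_le _ (Finset.mem_insert_of_mem (Finset.mem_union_right _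
      (Finset.mem_image_of_mem εs (Finset.mem_powerset.mpr (Finset.subset_univ S)))))
  set ε : ℝ := ε0 / (l + 2) with hεdef
  have hεpos : 0 < ε := div_pos hε0pos (by positivity)
  -- Key property 1: antipodal separation
  have P1 : ∀ (i : Fin m) (x : Ssphere h), (A i).Nonempty →
      Metric.infDist x (A i) < ε → ¬ Metric.infDist (ν x) (A i) < ε := by
    intro i x hne h1 h2
    have := hεa' i x hne
    have hl2 : (0:ℝ) < (l:ℝ) + 2 := by positivity
    have h2ε : 2 * ε ≤ ε0 := by
      rw [hεdef, ← mul_div_assoc, div_le_iff₀ hl2]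
      nlinarith [hε0pos]
    nlinarith [hε0a i]
  -- the support sets
  set Sx : Ssphere h → Finset (Fin m) := fun x =>
    Finset.univ.filter fun i => (A i).Nonempty ∧ Metric.infDist x (A i) < ε
    with hSx
  -- Key property 2: multiplicity
  have P2 : ∀ x, (Sx x).card ≤ l := by
    intro x
    by_contra hc
    push_neg at hc
    obtain ⟨S, hSsub, hScard⟩ := Finset.exists_subset_card_eq (by omega : l + 1 ≤ (Sx x).card)
    have hSne : ∀ i ∈ S, (A i).Nonempty := fun i hi =>
      (Finset.mem_filter.mp (hSsub hi)).2.1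
    have hlt : ∀ i ∈ S, Metric.infDist x (A i) < ε := fun i hi =>
      (Finset.mem_filter.mp (hSsub hi)).2.2
    have hsum : ∑ i ∈ S, Metric.infDist x (A i) < ∑ i ∈ S, ε :=
      Finset.sum_lt_sum_of_nonempty (Finset.card_pos.mp (by omega)) hlt
    rw [Finset.sum_const, hScard, nsmul_eq_mul] at hsum
    have h1 : εs S ≤ ∑ i ∈ S, Metric.infDist x (A i) := hεs' S hScard hSne x
    have h2 : ε0 ≤ εs S := hε0s S
    have h3 : ((l:ℝ) + 1) * ε < ε0 := by
      have hl2 : (0:ℝ) < (l:ℝ) + 2 := by positivity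
      rw [hεdef, ← mul_div_assoc, div_lt_iff₀ hl2]
      nlinarith [hε0pos]
    push_cast at hsum
    linarith
  -- the barycentric functions
  set d : Fin m → Ssphere h → ℝ := fun i x =>
    if (A i).Nonempty then max (ε - Metric.infDist x (A i)) 0 else 0 with hd
  have hdcont : ∀ i, Continuous (d i) := by
    intro i
    rw [hd]
    by_cases hne : (A i).Nonempty
    · simp only [if_pos hne]
      exact ((continuous_const.sub (Metric.continuous_infDist_pt (A i))).max
        continuous_const)
    · simp only [if_neg hne]; exact continuous_const
  have hdnonneg : ∀ i x, 0 ≤ d i x := by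
    intro i x; rw [hd]; dsimp only
    split
    · exact le_max_right _ _
    · exact le_refl _
  have hdpos_of_mem : ∀ i x, x ∈ A i → d i x = ε := by
    intro i x hx
    rw [hd]; dsimp only
    rw [if_pos ⟨x, hx⟩, Metric.infDist_zero_of_mem hx, sub_zero,
      max_eq_left hεpos.le]
  have hdsupp : ∀ i x, d i x ≠ 0 → i ∈ Sx x := by
    intro i x hdx
    rw [hd] at hdx; dsimp only at hdx
    rw [hSx, Finset.mem_filter]
    refine ⟨Finset.mem_univ i, ?_⟩
    by_cases hne : (A i).Nonempty
    · rw [if_pos hne] at hdx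
      refine ⟨hne, ?_⟩
      by_contra hge
      push_neg at hge
      exact hdx (max_eq_right (by linarith))
    · rw [if_neg hne] at hdx; exact absurd rfl hdx
  -- the denominator
  set D : Ssphere h → ℝ := fun x => ∑ j, d j x with hD
  have hDpos : ∀ x, 0 < D x := by
    intro x
    obtain ⟨i, hi⟩ := hcover x
    refine Finset.sum_pos' (fun j _ => hdnonneg j x) ⟨i, Finset.mem_univ i, ?_⟩
    rw [hdpos_of_mem i x hi]; exact hεpos
  have hDcont : Continuous D := continuous_finset_sum _ fun i _ => hdcont i
  -- the map g
  refine ⟨m, Finset.univ.powerset.filter (fun s => s.card ≤ l),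
    fun s hs => (Finset.mem_filter.mp hs).2, fun x i => d i x / D x, ?_, ?_, ?_⟩
  · exact continuous_pi fun i => (hdcont i).div hDcont fun x => (hDpos x).ne'
  · intro x
    refine ⟨fun i => div_nonneg (hdnonneg i x) (hDpos x).le, ?_, Sx x, ?_, ?_⟩
    · rw [← Finset.sum_div]
      exact div_self (hDpos x).ne'
    · exact Finset.mem_filter.mpr ⟨Finset.mem_powerset.mpr (Finset.subset_univ _), P2 x⟩
    · intro i hgi
      apply hdsupp i x
      intro hdz
      exact hgi (show d i x / D x = 0 by rw [hdz, zero_div])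
  · intro x heq
    obtain ⟨i, hi⟩ := hcover x
    have hgx : d i x / D x ≠ 0 := by
      rw [hdpos_of_mem i x hi]
      exact (div_pos hεpos (hDpos x)).ne'
    have hgνx : d i (ν x) / D (ν x) ≠ 0 := by
      have h' : d i x / D x = d i (ν x) / D (ν x) := congrFun heq i
      rw [← h']; exact hgx
    have hdνx : d i (ν x) ≠ 0 := fun hz => hgνx (by rw [hz, zero_div])
    have hiν := hdsupp i (ν x) hdνx
    rw [hSx, Finset.mem_filter] at hiν
    exact P1 i x hiν.2.1
      (by rw [Metric.infDist_zero_of_mem hi]; exact hεpos) hiν.2.2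
end

section
/- Suppose there is a continuous map g from S^h to the geometric realization of a finite simplicial complex K of dimension at most l−1 with g(x) ≠ g(−x) for all x, and moreover the minimal simplices containing g(x) and g(−x) are disjoint for every x. Then S^h can be covered by finitely many closed sets, none containing an antipodal pair, with no point covered more than l times. -/
/-- a continuous map g from S^h to the realization of a complex of
dimension at most l-1, with g(x) ≠ g(-x) and with the minimal simplices (supports)
of g(x) and g(-x) disjoint for every x, yields a finite closed cover of S^h with no
set containing an antipodal pair and with multiplicity at most l. -/
theorem stmt14 (h l n : ℕ) (K : Finset (Finset (Fin n)))
    (hK : ∀ s ∈ K, s.card ≤ l)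
    (g : Ssphere h → (Fin n → ℝ)) (hg : Continuous g)
    (hmem : ∀ x, g x ∈ realization n K)
    (hne : ∀ x, g x ≠ g (sphereNeg h x))
    (hdisj : ∀ x i, g x i ≠ 0 → g (sphereNeg h x) i = 0) :
    ∃ (m : ℕ) (A : Fin m → Set (Ssphere h)),
      (∀ i, IsClosed (A i)) ∧
      (∀ x, ∃ i, x ∈ A i) ∧
      (∀ i x, x ∈ A i → sphereNeg h x ∉ A i) ∧
      ∀ x, {i | x ∈ A i}.ncard ≤ l := by
  refine ⟨n, fun i => {x | ∀ j, g x j ≤ g x i}, ?_, ?_, ?_, ?_⟩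
  · intro i
    have : {x | ∀ j, g x j ≤ g x i} = ⋂ j, {x | g x j ≤ g x i} := by
      ext x; simp
    show IsClosed {x | ∀ j, g x j ≤ g x i}
    rw [this]
    exact isClosed_iInter fun j =>
      isClosed_le ((continuous_apply j).comp hg) ((continuous_apply i).comp hg)
  · intro x
    obtain ⟨hpos, hsum, -⟩ := hmem x
    have hne0 : (Finset.univ : Finset (Fin n)).Nonempty := by
      by_contra hc
      rw [Finset.not_nonempty_iff_eq_empty] at hc
      rw [hc, Finset.sum_empty] at hsum
      norm_num at hsum
    obtain ⟨i, -, hi⟩ := Finset.exists_max_image Finset.univ (g x) hne0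
    exact ⟨i, fun j => hi j (Finset.mem_univ j)⟩
  · intro i x hx hx'
    have key : ∀ y : Ssphere h, (∀ j, g y j ≤ g y i) → g y i ≠ 0 := by
      intro y hy h0
      obtain ⟨hpos, hsum, -⟩ := hmem y
      have : ∑ j, g y j ≤ 0 := by
        apply Finset.sum_nonpos
        intro j _
        exact (hy j).trans (le_of_eq h0)
      rw [hsum] at this; norm_num at this
    exact key _ hx' (hdisj x i (key x hx))
  · intro x
    obtain ⟨hpos, hsum, s, hs, hsup⟩ := hmem x
    have hsub : {i : Fin n | x ∈ {x | ∀ j, g x j ≤ g x i}} ⊆ (s : Set (Fin n)) := by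
      intro i hi
      apply hsup
      intro h0
      obtain ⟨hpos', hsum', -⟩ := hmem x
      have : ∑ j, g x j ≤ 0 := by
        apply Finset.sum_nonpos
        intro j _
        exact (hi j).trans (le_of_eq h0)
      rw [hsum] at this; norm_num at this
    calc {i : Fin n | x ∈ {x | ∀ j, g x j ≤ g x i}}.ncard
        ≤ (s : Set (Fin n)).ncard := Set.ncard_le_ncard hsub (Set.toFinite _)
      _ = s.card := by simp
      _ ≤ l := hK s hs
end

section
/- Let G be a finite graph and c a proper coloring with max over v of |{c(u) : u ∈ N(v)}| ≤ l. For each point y of the hom space H(G), let Z_y ⊎ T_y be the minimal cell of Hom(K_2,G) whose body contains y, and let U_i = {y ∈ H(G) : some vertex of Z_y has color i}. Then the sets U_i are open, cover H(G), contain no pair of antipodal points of H(G), and no point of H(G) lies in more than l of them. -/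
variable {V : Type} [Fintype V] [DecidableEq V]

/-- The hom space H(G) ⊆ ||B₀(G)||: barycentric-coordinate functions on
V(G) × {1,2} (encoded as V × Bool) with nonnegative entries summing to 1, the
first-copy coordinates summing to 1/2, and support S ⊎ T spanning a complete
bipartite subgraph of G. -/
def homSpace (G : SimpleGraph V) : Set ((V × Bool) → ℝ) :=
  {f | (∀ x, 0 ≤ f x) ∧ (∑ x, f x) = 1 ∧ (∑ v, f (v, true)) = 1 / 2 ∧
    ∀ u w, f (u, true) ≠ 0 → f (w, false) ≠ 0 → G.Adj u w}

/-- The antipodal involution on ||B₀(G)||: swap the two copies of V(G). -/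
def swapInvol (f : (V × Bool) → ℝ) : (V × Bool) → ℝ := fun x => f (x.1, !x.2)

/-- The set Uᵢ (as a subset of the ambient space): points of H(G) such that some
vertex of Z_y — the first part of the minimal cell Z_y ⊎ T_y containing y, i.e.
the support on the first copy — has color i. -/
def Uset (G : SimpleGraph V) (c : V → ℕ) (i : ℕ) : Set ((V × Bool) → ℝ) :=
  {f ∈ homSpace G | ∃ v, f (v, true) ≠ 0 ∧ c v = i}

/-- for a proper coloring c of G whose every (open) neighborhood has
at most l colors, the sets Uᵢ are open in H(G), cover H(G), contain no antipodal
pair, and no point of H(G) lies in more than l of them. -/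
theorem stmt18 (G : SimpleGraph V) [DecidableRel G.Adj] (c : V → ℕ)
    (hc : ∀ u v, G.Adj u v → c u ≠ c v)
    (l : ℕ) (hl : ∀ v, ((G.neighborFinset v).image c).card ≤ l) :
    (∀ i, IsOpen {y : homSpace G | (y : (V × Bool) → ℝ) ∈ Uset G c i}) ∧
    (∀ f ∈ homSpace G, ∃ i, f ∈ Uset G c i) ∧
    (∀ i, ∀ f ∈ Uset G c i, swapInvol f ∉ Uset G c i) ∧
    (∀ f ∈ homSpace G, {i | f ∈ Uset G c i}.Finite ∧ {i | f ∈ Uset G c i}.ncard ≤ l) := by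
  refine ⟨?_, ?_, ?_, ?_⟩
  · intro i
    have h : {y : homSpace G | (y : (V × Bool) → ℝ) ∈ Uset G c i}
        = ⋃ v, ⋃ (_ : c v = i),
          (fun y : homSpace G => (y : (V × Bool) → ℝ) (v, true)) ⁻¹' {0}ᶜ := by
      ext y
      simp only [Uset, Set.mem_setOf_eq, Set.mem_sep_iff, y.2, true_and,
        Set.mem_iUnion, Set.mem_preimage, Set.mem_compl_iff, Set.mem_singleton_iff]
      tauto
    rw [h]
    exact isOpen_iUnion fun v => isOpen_iUnion fun _ =>
      isOpen_compl_singleton.preimage ((continuous_apply _).comp continuous_subtype_val)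
  · intro f hf
    have h2 := hf.2.2.1
    have hv : ∃ v, f (v, true) ≠ 0 := by
      by_contra h
      push_neg at h
      simp only [h, Finset.sum_const_zero] at h2
      norm_num at h2
    obtain ⟨v, hv⟩ := hv
    exact ⟨c v, hf, v, hv, rfl⟩
  · rintro i f ⟨hfm, v, hv, hvi⟩ ⟨-, w, hw, hwi⟩
    have hadj := hfm.2.2.2 v w hv (by simpa [swapInvol] using hw)
    exact hc v w hadj (hvi.trans hwi.symm)
  · intro f hf
    have hset : {i | f ∈ Uset G c i} = c '' {v | f (v, true) ≠ 0} := by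
      ext i
      simp only [Uset, Set.mem_setOf_eq, Set.mem_sep_iff, hf, true_and, Set.mem_image]
    have hfin : (c '' {v | f (v, true) ≠ 0}).Finite := (Set.toFinite _).image c
    have hw : ∃ w, f (w, false) ≠ 0 := by
      by_contra h
      push_neg at h
      have h1 := hf.2.1
      have h2 := hf.2.2.1
      rw [Fintype.sum_prod_type] at h1
      simp only [Fintype.sum_bool, h, add_zero] at h1
      rw [h1] at h2
      norm_num at h2
    obtain ⟨w, hw⟩ := hw
    have hsub : c '' {v | f (v, true) ≠ 0} ⊆ ↑((G.neighborFinset w).image c) := by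
      rintro i ⟨v, hv, rfl⟩
      simp only [Finset.coe_image, Set.mem_image, Finset.mem_coe,
        SimpleGraph.mem_neighborFinset]
      exact ⟨v, (hf.2.2.2 v w hv hw).symm, rfl⟩
    constructor
    · rw [hset]; exact hfin
    · rw [hset]
      calc (c '' {v | f (v, true) ≠ 0}).ncard
          ≤ (↑((G.neighborFinset w).image c) : Set ℕ).ncard :=
            Set.ncard_le_ncard hsub (Set.toFinite _)
        _ = ((G.neighborFinset w).image c).card := Set.ncard_coe_finset _
        _ ≤ l := hl w
end
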